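/- Suppose F is a hedge formed for Q[S] in G[V∖Pa↔(S)] with |F∖S| = 2. Then the two vertices of F∖S can be labeled a and b so that a ∈ Pa(S)∖Bid(S), b ∈ Bid(S)∖Pa(S), there is a bidirected edge between a and b, and b is a parent of a. -/

import Mathlib

/-- A semi-Markovian graph on vertex type `V`: a DAG of directed edges together with a
symmetric irreflexive relation of bidirected edges. `dir x y` means there is a directed
edge from `x` to `y`, i.e. `x` is a parent of `y`. -/
structure SemiMarkovian (V : Type*) where
  dir : V → V → Prop
  bid : V → V → Prop
  bid_symm : ∀ x y, bid x y → bid y x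
  bid_irrefl : ∀ x, ¬ bid x x
  acyclic : ∀ x, ¬ Relation.TransGen dir x x

namespace SemiMarkovian

variable {V : Type*}

/-- The induced subgraph of `G` on the vertex set `W`. -/
def induce (G : SemiMarkovian V) (W : Set V) : SemiMarkovian V where
  dir a b := a ∈ W ∧ b ∈ W ∧ G.dir a b
  bid a b := a ∈ W ∧ b ∈ W ∧ G.bid a b
  bid_symm := fun x y h => ⟨h.2.1, h.1, G.bid_symm x y h.2.2⟩
  bid_irrefl := fun x h => G.bid_irrefl x h.2.2
  acyclic := fun x h =>
    G.acyclic x (by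
      have key : ∀ y, Relation.TransGen (fun a b => a ∈ W ∧ b ∈ W ∧ G.dir a b) x y →
          Relation.TransGen G.dir x y := by
        intro y hy
        induction hy with
        | single hab => exact .single hab.2.2
        | tail _ hab ih => exact .tail ih hab.2.2
      exact key x h)

/-- There is a directed path (possibly of length zero) from `x` to `y` all of whose
vertices lie in `F`. -/
def DirPathIn (G : SemiMarkovian V) (F : Set V) (x y : V) : Prop :=
  x ∈ F ∧ Relation.ReflTransGen (fun a b => b ∈ F ∧ G.dir a b) x y

/-- `x` and `y` are joined by a path of bidirected edges all of whose vertices lie in `F`. -/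
def BidConnIn (G : SemiMarkovian V) (F : Set V) (x y : V) : Prop :=
  x ∈ F ∧ Relation.ReflTransGen (fun a b => b ∈ F ∧ G.bid a b) x y

/-- `x` is an ancestor of the set `S` in `G[F]`. -/
def AncestorIn (G : SemiMarkovian V) (F S : Set V) (x : V) : Prop :=
  ∃ s ∈ S, G.DirPathIn F x s

/-- `G[F]` is a c-component: any two vertices of `F` are joined by a path of bidirected
edges all of whose vertices lie in `F`. -/
def CComponent (G : SemiMarkovian V) (F : Set V) : Prop :=
  ∀ x ∈ F, ∀ y ∈ F, G.BidConnIn F x y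

/-- `F` is a hedge formed for `Q[S]` in `G`: `S ⊊ F`, every vertex of `F` is an ancestor of
`S` in `G[F]`, and `G[F]` is a c-component. -/
def IsHedge (G : SemiMarkovian V) (S F : Set V) : Prop :=
  S ⊂ F ∧ (∀ x ∈ F, G.AncestorIn F S x) ∧ G.CComponent F

/-- The hedge hull of `S` in `G`: the union of `S` with all hedges formed for `Q[S]` in `G`. -/
def Hhull (G : SemiMarkovian V) (S : Set V) : Set V :=
  S ∪ ⋃₀ {F | G.IsHedge S F}

/-- Vertices outside `S` that are parents of some vertex of `S`. -/
def Pa (G : SemiMarkovian V) (S : Set V) : Set V :=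
  {x | x ∉ S ∧ ∃ s ∈ S, G.dir x s}

/-- Vertices outside `S` that have a bidirected edge to some vertex of `S`. -/
def Bid (G : SemiMarkovian V) (S : Set V) : Set V :=
  {x | x ∉ S ∧ ∃ s ∈ S, G.bid x s}

/-- `Pa↔(S) := Pa(S) ∩ Bid(S)`. -/
def PaBid (G : SemiMarkovian V) (S : Set V) : Set V := G.Pa S ∩ G.Bid S

end SemiMarkovian

/-- If a path starts outside `S` and ends in `S`, there is a first edge entering `S`. -/
lemma entry_lemma {V : Type*} {r : V → V → Prop} {S : Set V} {x y : V}
    (h : Relation.ReflTransGen r x y) (hy : y ∈ S) :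
    x ∉ S → ∃ u v, u ∉ S ∧ v ∈ S ∧ r u v ∧ Relation.ReflTransGen r x u := by
  induction h using Relation.ReflTransGen.head_induction_on with
  | refl => exact fun hx => absurd hy hx
  | @head a b hab h ih =>
    intro hx
    by_cases hb : b ∈ S
    · exact ⟨a, b, hx, hb, hab, Relation.ReflTransGen.refl⟩
    · obtain ⟨u, v, h1, h2, h3, h4⟩ := ih hb
      exact ⟨u, v, h1, h2, h3, Relation.ReflTransGen.head hab h4⟩

/-- The endpoint of a path whose edges land in `F` lies in `F` if the start does. -/
lemma last_in {V : Type*} {F : Set V} {r : V → V → Prop} {x u : V}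
    (h : Relation.ReflTransGen (fun a b => b ∈ F ∧ r a b) x u) (hx : x ∈ F) : u ∈ F := by
  induction h with
  | refl => exact hx
  | tail _ h2 _ => exact h2.1

/-- If `F` is a hedge formed for `Q[S]` in `G[V∖Pa↔(S)]` with `|F∖S| = 2`,
then the two vertices of `F∖S` can be labeled `a`, `b` with `a ∈ Pa(S)∖Bid(S)`,
`b ∈ Bid(S)∖Pa(S)`, a bidirected edge between `a` and `b`, and `b` a parent of `a`. -/
theorem hedge_size_two_structure {V : Type*} [Fintype V] (G : SemiMarkovian V) (S F : Set V)
    (hS : G.CComponent S)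
    (hF : (G.induce (G.PaBid S)ᶜ).IsHedge S F)
    (hcard : (F \ S).ncard = 2) :
    ∃ a b : V, F \ S = {a, b} ∧ a ∈ G.Pa S \ G.Bid S ∧ b ∈ G.Bid S \ G.Pa S ∧
      G.bid a b ∧ G.dir b a := by
  obtain ⟨hSF, hanc, hcc⟩ := hF
  obtain ⟨x, y, hxy, hFS⟩ := Set.ncard_eq_two.mp hcard
  have hxFS : x ∈ F \ S := by rw [hFS]; left; rfl
  -- a directed path from x to S
  obtain ⟨s, hsS, _, hxpath⟩ := hanc x hxFS.1
  have hsF : s ∈ F := hSF.1 hsS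
  -- the vertex p whose edge first enters S is a parent of S
  obtain ⟨p, v, hpS, hvS, hedge, hpathp⟩ := entry_lemma hxpath hsS hxFS.2
  obtain ⟨hvF, hpW, hvW, hdirpv⟩ := hedge
  have hpF : p ∈ F := last_in hpathp hxFS.1
  have hpPa : p ∈ G.Pa S := ⟨hpS, v, hvS, hdirpv⟩
  have hpnBid : p ∉ G.Bid S := fun hb => hpW ⟨hpPa, hb⟩
  -- a bidirected path from x to S
  obtain ⟨_, hxbid⟩ := hcc x hxFS.1 s hsF
  obtain ⟨q, w, hqS, hwS, hedgeb, hpathq⟩ := entry_lemma hxbid hsS hxFS.2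
  obtain ⟨hwF, hqW, hwW, hbidqw⟩ := hedgeb
  have hqF : q ∈ F := last_in hpathq hxFS.1
  have hqBid : q ∈ G.Bid S := ⟨hqS, w, hwS, hbidqw⟩
  have hqnPa : q ∉ G.Pa S := fun hp => hqW ⟨hp, hqBid⟩
  have hpq : p ≠ q := fun h => hqnPa (h ▸ hpPa)
  have hpmem : p ∈ F \ S := ⟨hpF, hpS⟩
  have hqmem : q ∈ F \ S := ⟨hqF, hqS⟩
  have hset : F \ S = {p, q} := by
    have h1 : p = x ∨ p = y := by rw [hFS] at hpmem; exact hpmem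
    have h2 : q = x ∨ q = y := by rw [hFS] at hqmem; exact hqmem
    rw [hFS]
    rcases h1 with rfl | rfl <;> rcases h2 with rfl | rfl
    · exact absurd rfl hpq
    · rfl
    · exact Set.pair_comm _ _
    · exact absurd rfl hpq
  -- the first bidirected edge from p goes to q
  obtain ⟨_, hpbid⟩ := hcc p hpF s hsF
  have hbidpq : G.bid p q := by
    rcases Relation.ReflTransGen.cases_head hpbid with heq | ⟨v1, ⟨hv1F, _, _, hbid1⟩, _⟩
    · exact absurd (heq ▸ hsS) hpS
    · by_cases hv1S : v1 ∈ S
      · exact absurd ⟨hpS, v1, hv1S, hbid1⟩ hpnBid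
      · have hv1 : v1 ∈ F \ S := ⟨hv1F, hv1S⟩
        rw [hset] at hv1
        rcases hv1 with h | h
        · exact absurd (h ▸ hbid1) (G.bid_irrefl p)
        · exact h ▸ hbid1
  -- the first directed edge from q goes to p
  obtain ⟨s2, hs2S, _, hqdir⟩ := hanc q hqF
  have hdirqp : G.dir q p := by
    rcases Relation.ReflTransGen.cases_head hqdir with heq | ⟨v2, ⟨hv2F, _, _, hdir2⟩, _⟩
    · exact absurd (heq ▸ hs2S) hqS
    · by_cases hv2S : v2 ∈ S
      · exact absurd ⟨hqS, v2, hv2S, hdir2⟩ hqnPa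
      · have hv2 : v2 ∈ F \ S := ⟨hv2F, hv2S⟩
        rw [hset] at hv2
        rcases hv2 with h | h
        · exact h ▸ hdir2
        · exact absurd (Relation.TransGen.single (h ▸ hdir2)) (G.acyclic q)
  exact ⟨p, q, hset, ⟨hpPa, hpnBid⟩, ⟨hqBid, hqnPa⟩, hbidpq, hdirqp⟩
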